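/- arXiv:2601.07428 — 2 statements merged into one kernel-verified Lean document; each statement's English description precedes it below -/
import Mathlib

section
/- For every ideal I on a countable set X, K_I = M_I if and only if I is the ideal [X]^{<ω} of finite subsets of X. -/
open Cardinal Filter Set
open scoped ENNReal

noncomputable section

/-- An ideal on a (countable) set `X`, in the sense of the paper: a proper family of
subsets of `X` closed under taking subsets and finite unions and containing all
finite subsets of `X`. -/
structure IsIdealOn {X : Type} (I : Set (Set X)) : Prop where
  subset_mem : ∀ ⦃A B : Set X⦄, A ⊆ B → B ∈ I → A ∈ I
  union_mem : ∀ ⦃A B : Set X⦄, A ∈ I → B ∈ I → A ∪ B ∈ I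
  finite_mem : ∀ ⦃A : Set X⦄, A.Finite → A ∈ I
  proper : (univ : Set X) ∉ I

/-- The finite initial segment `x ↾ n` of `x : X^ω`, as a list (an element of `X^{<ω}`). -/
def seg {X : Type} (x : ℕ → X) (n : ℕ) : List X := (List.range n).map x

/-- The `I`-Miller null ideal `M_I`: the σ-ideal on `X^ω` generated by the sets
`M_φ = {x | ∀^∞ n, x n ∈ φ (x ↾ n)}`, where `φ : X^{<ω} → I`.  (A set is in the
generated σ-ideal iff it is covered by countably many generators.) -/
def MIdeal {X : Type} (I : Set (Set X)) : Set (Set (ℕ → X)) :=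
  {A | ∃ φ : ℕ → List X → Set X, (∀ n s, φ n s ∈ I) ∧
    A ⊆ ⋃ n, {x : ℕ → X | ∀ᶠ m in atTop, x m ∈ φ n (seg x m)}}

/-- The σ-ideal `K_I` on `X^ω` generated by the sets
`K_φ = {x | ∀^∞ n, x n ∈ φ n}`, where `φ : ω → I`. -/
def KIdeal {X : Type} (I : Set (Set X)) : Set (Set (ℕ → X)) :=
  {A | ∃ φ : ℕ → ℕ → Set X, (∀ n m, φ n m ∈ I) ∧
    A ⊆ ⋃ n, {x : ℕ → X | ∀ᶠ m in atTop, x m ∈ φ n m}}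

/-- Additivity `add(J)` of a (σ-)ideal `J`: the least cardinality of a subfamily of `J`
whose union is not in `J`. -/
def addIdeal {Y : Type} (J : Set (Set Y)) : Cardinal :=
  sInf {c | ∃ 𝒜 : Set (Set Y), 𝒜 ⊆ J ∧ ⋃₀ 𝒜 ∉ J ∧ Cardinal.mk 𝒜 = c}

/-- Covering number `cov(J)`: the least cardinality of a subfamily of `J` covering `Y`. -/
def covIdeal {Y : Type} (J : Set (Set Y)) : Cardinal :=
  sInf {c | ∃ 𝒜 : Set (Set Y), 𝒜 ⊆ J ∧ ⋃₀ 𝒜 = Set.univ ∧ Cardinal.mk 𝒜 = c}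

/-- Uniformity `non(J)`: the least cardinality of a subset of `Y` not in `J`. -/
def nonIdeal {Y : Type} (J : Set (Set Y)) : Cardinal :=
  sInf {c | ∃ S : Set Y, S ∉ J ∧ Cardinal.mk S = c}

/-- Cofinality `cof(J)`: the least cardinality of a cofinal (w.r.t. `⊆`) subfamily of `J`. -/
def cofIdeal {Y : Type} (J : Set (Set Y)) : Cardinal :=
  sInf {c | ∃ 𝒜 : Set (Set Y), 𝒜 ⊆ J ∧ (∀ B ∈ J, ∃ A ∈ 𝒜, B ⊆ A) ∧ Cardinal.mk 𝒜 = c}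

/-- `f ≤* g`: eventual domination on `ω^ω`. -/
def LeStar (f g : ℕ → ℕ) : Prop := ∀ᶠ n in atTop, f n ≤ g n

/-- The bounding number `𝔟`. -/
def bNum : Cardinal :=
  sInf {c | ∃ F : Set (ℕ → ℕ), (∀ g : ℕ → ℕ, ∃ f ∈ F, ¬ LeStar f g) ∧ Cardinal.mk F = c}

/-- The dominating number `𝔡`. -/
def dNum : Cardinal :=
  sInf {c | ∃ F : Set (ℕ → ℕ), (∀ f : ℕ → ℕ, ∃ g ∈ F, LeStar f g) ∧ Cardinal.mk F = c}

/-- `A ⊆* B`: almost inclusion (`A \ B` finite). -/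
def AlSub {X : Type} (A B : Set X) : Prop := (A \ B).Finite

/-- The set of cardinalities of witnessing families for `add*_ω(I)`: families `𝒜 ⊆ I`
such that for every countable `B̄ ⊆ I` some `A ∈ 𝒜` satisfies `A ⊄* B` for all `B ∈ B̄`.
`add*_ω(I)` is the minimum of this set (`∞` if it is empty). -/
def addStarOmegaFam {X : Type} (I : Set (Set X)) : Set Cardinal :=
  {c | ∃ 𝒜 : Set (Set X), 𝒜 ⊆ I ∧
    (∀ B : ℕ → Set X, (∀ n, B n ∈ I) → ∃ A ∈ 𝒜, ∀ n, ¬ AlSub A (B n)) ∧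
    Cardinal.mk 𝒜 = c}

/-- The set of cardinalities of witnessing families for `cof*_ω(I)`: families `𝒜` of
countable subsets of `I` such that for every countable `B̄ ⊆ I` there is `Ā ∈ 𝒜` with:
every `B ∈ B̄` satisfies `B ⊆* A` for some `A ∈ Ā`.  `cof*_ω(I)` is the minimum. -/
def cofStarOmegaFam {X : Type} (I : Set (Set X)) : Set Cardinal :=
  {c | ∃ 𝒜 : Set (Set (Set X)), (∀ As ∈ 𝒜, As.Countable ∧ As ⊆ I) ∧
    (∀ B : ℕ → Set X, (∀ n, B n ∈ I) → ∃ As ∈ 𝒜, ∀ n, ∃ A ∈ As, AlSub (B n) A) ∧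
    Cardinal.mk 𝒜 = c}

/-- The set of cardinalities of witnessing families for `non*_ω(I)`: families `𝒜` of
infinite subsets of `X` such that for every countable `B̄ ⊆ I` there is `A ∈ 𝒜` with
`A ∩ B` finite for all `B ∈ B̄`.  `non*_ω(I)` is the minimum of this set. -/
def nonStarOmegaFam {X : Type} (I : Set (Set X)) : Set Cardinal :=
  {c | ∃ 𝒜 : Set (Set X), (∀ A ∈ 𝒜, A.Infinite) ∧
    (∀ B : ℕ → Set X, (∀ n, B n ∈ I) → ∃ A ∈ 𝒜, ∀ n, (A ∩ B n).Finite) ∧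
    Cardinal.mk 𝒜 = c}

/-- The set of cardinalities of witnessing families for `cov*(I)`: families `𝒜 ⊆ I` such
that every infinite `B ⊆ X` has infinite intersection with some member of `𝒜`.
`cov*(I)` is the minimum of this set (`∞` if it is empty, i.e. if `I` is not tall). -/
def covStarFam {X : Type} (I : Set (Set X)) : Set Cardinal :=
  {c | ∃ 𝒜 : Set (Set X), 𝒜 ⊆ I ∧
    (∀ B : Set X, B.Infinite → ∃ A ∈ 𝒜, (A ∩ B).Infinite) ∧ Cardinal.mk 𝒜 = c}

/-- The set of cardinalities of witnessing families for `non*(I)`: families `𝒜` of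
infinite subsets of `X` such that every `B ∈ I` has finite intersection with some
member of `𝒜`.  `non*(I)` is the minimum of this set. -/
def nonStarFam {X : Type} (I : Set (Set X)) : Set Cardinal :=
  {c | ∃ 𝒜 : Set (Set X), (∀ A ∈ 𝒜, A.Infinite) ∧
    (∀ B ∈ I, ∃ A ∈ 𝒜, (A ∩ B).Finite) ∧ Cardinal.mk 𝒜 = c}

/-- The meager ideal of the product space `X^ω`, where `X` carries the discrete
topology (for countable `X` this is a Polish space). -/
def meagerIdeal (X : Type) : Set (Set (ℕ → X)) :=
  letI : TopologicalSpace X := ⊥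
  {A : Set (ℕ → X) | IsMeagre A}

/-- The Fubini product `I ⊗ J` of two ideals. -/
def Fubini {X Y : Type} (I : Set (Set X)) (J : Set (Set Y)) : Set (Set (X × Y)) :=
  {A | {x : X | {y : Y | (x, y) ∈ A} ∉ J} ∈ I}

/-- The ideal `Fin` of finite subsets of `X`. -/
def finIdeal (X : Type) : Set (Set X) := {A : Set X | A.Finite}

/-- The nowhere dense ideal on `2^{<ω}`: `A` belongs to it iff for every `s` there is an
extension `t ⊇ s` none of whose extensions belongs to `A`. -/
def nwdIdeal : Set (Set (List Bool)) :=
  {A | ∀ s : List Bool, ∃ t : List Bool, s <+: t ∧ ∀ u : List Bool, t <+: u → u ∉ A}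

/-- A submeasure: monotone, finitely subadditive, vanishing on `∅`. -/
def IsSubmeasure (φ : Set ℕ → ℝ≥0∞) : Prop :=
  φ ∅ = 0 ∧ (∀ A B : Set ℕ, A ⊆ B → φ A ≤ φ B) ∧ ∀ A B : Set ℕ, φ (A ∪ B) ≤ φ A + φ B

/-- `I` is gradually fragmented: there are a partition `⟨P n⟩` of `ω` into nonempty finite
sets and submeasures `φ n` with `A ∈ I ↔ sup_n φ n (A ∩ P n) < ∞`, together with
`f : ω → ω` such that for all `n, i`, for all but finitely many `j`: any family of at
most `i` subsets of `P j`, each of `φ j`-value `≤ n`, has union of `φ j`-value `≤ f n`. -/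
def GraduallyFragmented (I : Set (Set ℕ)) : Prop :=
  ∃ (P : ℕ → Set ℕ) (φ : ℕ → Set ℕ → ℝ≥0∞) (f : ℕ → ℕ),
    (∀ n, (P n).Finite) ∧ (∀ n, (P n).Nonempty) ∧
    (∀ n m, n ≠ m → Disjoint (P n) (P m)) ∧ (⋃ n, P n) = Set.univ ∧
    (∀ n, IsSubmeasure (φ n)) ∧
    (∀ A : Set ℕ, A ∈ I ↔ (⨆ n, φ n (A ∩ P n)) < ⊤) ∧
    (∀ n i : ℕ, ∀ᶠ j in atTop, ∀ ℬ : Finset (Set ℕ), ℬ.card ≤ i →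
      (∀ B ∈ ℬ, B ⊆ P j) → (∀ B ∈ ℬ, φ j B ≤ (n : ℝ≥0∞)) →
      φ j (⋃ B ∈ ℬ, B) ≤ ((f n : ℕ) : ℝ≥0∞))

/-- The basic clopen cylinder of `2^ω` determined by a finite binary string. -/
def cylSet (s : List Bool) : Set (ℕ → Bool) :=
  {x | ∀ i : Fin s.length, x i.val = s.get i}

/-- `A ⊆ 2^ω` is null for the uniform (coin-flipping) product measure: for every `ε > 0`
it is covered by countably many cylinders of total weight `≤ ε` (the cylinder of a
string `s` has weight `2^{-|s|}`). -/
def IsNullCantor (A : Set (ℕ → Bool)) : Prop :=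
  ∀ ε : ℝ≥0∞, 0 < ε → ∃ s : ℕ → List Bool,
    A ⊆ (⋃ n, cylSet (s n)) ∧ (∑' n : ℕ, (2⁻¹ : ℝ≥0∞) ^ (s n).length) ≤ ε

/-- Coordinatewise addition modulo 2 on `2^ω`. -/
def xorAdd (x y : ℕ → Bool) : ℕ → Bool := fun n => xor (x n) (y n)

/-- The transitive additivity `add_t(𝒩)` of the null ideal of `2^ω`:
`min {|A| : A ⊆ 2^ω ∧ ∃ X ∈ 𝒩, A + X ∉ 𝒩}`. -/
def addTNull : Cardinal :=
  sInf {c | ∃ A : Set (ℕ → Bool),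
    (∃ N : Set (ℕ → Bool), IsNullCantor N ∧ ¬ IsNullCantor (Set.image2 xorAdd A N)) ∧
    Cardinal.mk A = c}

/-- Kada's cardinal invariant `𝔩`: the least `κ` such that for every `g ∈ ω^ω` there is a
family `𝒮`, of size `κ`, of slaloms `S` with `S i ⊆ {0, …, g i}` and `|S i| ≤ i`, such
that every `f ≤* g` satisfies `f ∈* S` for some `S ∈ 𝒮`. -/
def lNum : Cardinal :=
  sInf {c : Cardinal | ∀ g : ℕ → ℕ, ∃ 𝒮 : Set (ℕ → Finset ℕ),
    (∀ S ∈ 𝒮, ∀ i : ℕ, S i ⊆ Finset.range (g i + 1) ∧ (S i).card ≤ i) ∧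
    (∀ f : ℕ → ℕ, LeStar f g → ∃ S ∈ 𝒮, ∀ᶠ i in atTop, f i ∈ S i) ∧
    Cardinal.mk 𝒮 = c}

/-- Membership in `C ⊆ 2^ω` only depends on the first `n` coordinates. -/
def DeterminedBy (C : Set (ℕ → Bool)) (n : ℕ) : Prop :=
  ∀ x y : ℕ → Bool, (∀ i < n, x i = y i) → (x ∈ C ↔ y ∈ C)

/-- Extension of a finite binary string by `false`s. -/
def extendFalse {n : ℕ} (s : Fin n → Bool) : ℕ → Bool :=
  fun i => if h : i < n then s ⟨i, h⟩ else false

/-- `C ⊆ 2^ω` has uniform product measure `1/2`: for some `n`, membership in `C` depends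
only on the first `n` coordinates and exactly half of the `2^n` cylinders of level `n`
are included in `C`. -/
def HalfMeasure (C : Set (ℕ → Bool)) : Prop :=
  ∃ n : ℕ, DeterminedBy C n ∧
    2 * Nat.card {s : Fin n → Bool // extendFalse s ∈ C} = 2 ^ n

/-- Clopenness in the Cantor space `2^ω` (`Bool` discrete, product topology). -/
def IsClopenCantor (C : Set (ℕ → Bool)) : Prop :=
  letI : TopologicalSpace Bool := ⊥
  IsClopen C

/-- Closedness in the Cantor space `2^ω`. -/
def IsClosedCantor (C : Set (ℕ → Bool)) : Prop :=
  letI : TopologicalSpace Bool := ⊥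
  IsClosed C

/-- `Ω`: the (countable) set of clopen subsets of `2^ω` of measure `1/2`. -/
abbrev SoleckiBase : Type := {C : Set (ℕ → Bool) // IsClopenCantor C ∧ HalfMeasure C}

/-- The Solecki ideal `𝒮` on `Ω`: the ideal generated by the sets
`I_y = {C ∈ Ω : y ∈ C}` for `y ∈ 2^ω`. -/
def SoleckiIdeal : Set (Set SoleckiBase) :=
  {A | ∃ F : Finset (ℕ → Bool), A ⊆ ⋃ y ∈ F, {C : SoleckiBase | y ∈ C.val}}

/-- `cov_ω(𝒩)`: the least cardinality of a family of Lebesgue-null sets of reals such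
that every countable set of reals is contained in one of them. -/
def covOmegaNull : Cardinal :=
  sInf {c | ∃ 𝒜 : Set (Set ℝ), (∀ N ∈ 𝒜, MeasureTheory.volume N = 0) ∧
    (∀ B : Set ℝ, B.Countable → ∃ N ∈ 𝒜, B ⊆ N) ∧ Cardinal.mk 𝒜 = c}

/-- `non(𝒩)`: the least cardinality of a non-null set of reals. -/
def nonNullReal : Cardinal :=
  sInf {c | ∃ S : Set ℝ, MeasureTheory.volume S ≠ 0 ∧ Cardinal.mk S = c}

/-- The eventually different ideal `ℰ𝒟` on `ω × ω`. -/
def EDIdeal : Set (Set (ℕ × ℕ)) :=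
  {A | ∃ k : ℕ, ∀ᶠ n in atTop,
    {m : ℕ | (n, m) ∈ A}.Finite ∧ {m : ℕ | (n, m) ∈ A}.ncard ≤ k}

/-- Characteristic function identifying `P(ω)` with `2^ω`. -/
def chiSet (A : Set ℕ) : ℕ → Bool :=
  fun n => @decide (n ∈ A) (Classical.propDecidable _)

/-- `I ⊆ P(ω)` is `F_σ`: under the identification `P(ω) ≅ 2^ω`, `I` is a countable
union of closed subsets of the Cantor space. -/
def IsFSigmaIdeal (I : Set (Set ℕ)) : Prop :=
  ∃ C : ℕ → Set (ℕ → Bool), (∀ n, IsClosedCantor (C n)) ∧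
    ∀ A : Set ℕ, A ∈ I ↔ chiSet A ∈ ⋃ n, C n

/-- The underlying countable set of `Fin^{⊗(n+1)}`: `FinPowType 0 = ω`,
`FinPowType (n+1) = ω × FinPowType n`. -/
def FinPowType : ℕ → Type
  | 0 => ℕ
  | n + 1 => ℕ × FinPowType n

/-- The iterated Fubini power of `Fin`: `FinPowIdeal 0 = Fin`, and
`FinPowIdeal (n+1) = Fin ⊗ FinPowIdeal n`; thus `Fin^{⊗k} = FinPowIdeal (k-1)`. -/
def FinPowIdeal : (n : ℕ) → Set (Set (FinPowType n))
  | 0 => finIdeal ℕ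
  | n + 1 => Fubini (finIdeal ℕ) (FinPowIdeal n)

/-- `π` `k`-constantly bounding-predicts `f`: for all but finitely many `i` there is
`j ∈ [i, i + k)` with `f j ≤ π (f ↾ j)`. -/
def ConstBddPred (k : ℕ) (π : List ℕ → ℕ) (f : ℕ → ℕ) : Prop :=
  ∀ᶠ i in atTop, ∃ j : ℕ, i ≤ j ∧ j < i + k ∧ f j ≤ π (seg f j)

/-- The constant bounding evasion number `𝔢^const_≤(k)`. -/
def eConstLe (k : ℕ) : Cardinal :=
  sInf {c | ∃ F : Set (ℕ → ℕ),
    (∀ π : List ℕ → ℕ, ∃ f ∈ F, ¬ ConstBddPred k π f) ∧ Cardinal.mk F = c}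

/-- The constant bounding prediction number `𝔳^const_≤(k)`. -/
def vConstLe (k : ℕ) : Cardinal :=
  sInf {c | ∃ Ps : Set (List ℕ → ℕ),
    (∀ f : ℕ → ℕ, ∃ π ∈ Ps, ConstBddPred k π f) ∧ Cardinal.mk Ps = c}

/-- The asymptotic density zero ideal `𝒵` on `ω`. -/
def densityZero : Set (Set ℕ) :=
  {A : Set ℕ | Tendsto (fun n : ℕ => ((A ∩ Iio n).ncard : ℝ) / (n : ℝ)) atTop (nhds (0 : ℝ))}

/-- The σ-ideal `ℰ` on `2^ω` generated by the closed null sets. -/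
def EIdeal : Set (Set (ℕ → Bool)) :=
  {A | ∃ C : ℕ → Set (ℕ → Bool),
    (∀ n, IsClosedCantor (C n) ∧ IsNullCantor (C n)) ∧ A ⊆ ⋃ n, C n}


/-! Every `K_φ` is the Miller set of `s ↦ φ |s|`, so `K_I ⊆ M_I`. For finite `φ`, the nodes
of length `m` that a branch of the `φ`-tree above a fixed node can pass through form a finite
set, so a branch of `M_φ` is caught by a single `K_ψ`; countably many starting nodes give
`M_Fin ⊆ K_Fin`. Conversely, if `A ∈ I` is infinite, code `X` injectively into `A` by `e`
and let `φ s = A ∪ {y | s ends in e y}`: then `M_φ` contains sequences with arbitrary odd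
coordinates, and diagonalising against countably many `K_ψ` on the odd coordinates shows
that `M_φ ∉ K_I`. -/

section MillerIdeal

variable {X : Type}

@[simp]
lemma length_seg (x : ℕ → X) (n : ℕ) : (seg x n).length = n := by
  simp [seg]

lemma seg_succ (x : ℕ → X) (n : ℕ) : seg x (n + 1) = seg x n ++ [x n] := by
  simp [seg, List.range_succ]

lemma getLast?_seg_succ (x : ℕ → X) (n : ℕ) : (seg x (n + 1)).getLast? = some (x n) := by
  simp [seg_succ]

theorem KIdeal_subset_MIdeal (I : Set (Set X)) : KIdeal I ⊆ MIdeal I := by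
  rintro S ⟨ψ, hψI, hS⟩
  refine ⟨fun n s => ψ n s.length, fun n s => hψI n s.length, fun x hx => ?_⟩
  obtain ⟨n, hn⟩ := mem_iUnion.1 (hS hx)
  exact mem_iUnion.2 ⟨n, by simpa using hn⟩

def treeLevel (φ : List X → Set X) (s : List X) : ℕ → Set (List X)
  | 0 => {s}
  | j + 1 => ⋃ t ∈ treeLevel φ s j, (fun a => t ++ [a]) '' φ t

lemma treeLevel_finite {φ : List X → Set X} (hφ : ∀ t, (φ t).Finite) (s : List X) :
    ∀ j, (treeLevel φ s j).Finite
  | 0 => finite_singleton s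
  | j + 1 => (treeLevel_finite hφ s j).biUnion fun t _ => (hφ t).image _

lemma seg_add_mem_treeLevel {φ : List X → Set X} {x : ℕ → X} {k : ℕ}
    (hx : ∀ m ≥ k, x m ∈ φ (seg x m)) : ∀ j, seg x (k + j) ∈ treeLevel φ (seg x k) j
  | 0 => rfl
  | j + 1 => by
    rw [← add_assoc, seg_succ]
    exact mem_biUnion (seg_add_mem_treeLevel hx j) ⟨x (k + j), hx _ (k.le_add_right j), rfl⟩

theorem MIdeal_finIdeal_subset_KIdeal [Countable X] :
    MIdeal (finIdeal X) ⊆ KIdeal (finIdeal X) := by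
  rintro S ⟨φ, hφ, hS⟩
  have : Nonempty (ℕ × ℕ × List X) := ⟨(0, 0, [])⟩
  obtain ⟨e, he⟩ := exists_surjective_nat (ℕ × ℕ × List X)
  -- for `e i = (n, k, s)`, the `i`-th generator follows the `φ n`-tree from `s` at level `k`
  let ψ : ℕ → ℕ → Set X := fun i m =>
    ⋃ t ∈ treeLevel (φ (e i).1) (e i).2.2 (m - (e i).2.1), φ (e i).1 t
  have hψ : ∀ i m, ψ i m ∈ finIdeal X := fun i m =>
    (treeLevel_finite (hφ _) _ _).biUnion fun t _ => hφ _ t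
  refine ⟨ψ, hψ, fun x hx => ?_⟩
  obtain ⟨n, hn⟩ := mem_iUnion.1 (hS hx)
  obtain ⟨k, hk⟩ := eventually_atTop.1 hn
  obtain ⟨i, hi⟩ := he (n, k, seg x k)
  refine mem_iUnion.2 ⟨i, eventually_atTop.2 ⟨k, fun m hm => ?_⟩⟩
  have hseg : seg x m ∈ treeLevel (φ n) (seg x k) (m - k) := by
    simpa [Nat.add_sub_cancel' hm] using seg_add_mem_treeLevel hk (m - k)
  simp only [ψ, hi]
  exact mem_biUnion hseg (hk m hm)

theorem notMem_KIdeal_of_forall_odd {I : Set (Set X)} (hI : Set.univ ∉ I) {S : Set (ℕ → X)}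
    (hS : ∀ g : ℕ → X, ∃ x ∈ S, ∀ j, x (2 * j + 1) = g j) : S ∉ KIdeal I := by
  rintro ⟨ψ, hψI, hSψ⟩
  have hescape : ∀ j, ∃ y, y ∉ ψ j.unpair.1 (2 * j + 1) := fun j => by
    by_contra! h
    exact hI (eq_univ_of_forall h ▸ hψI _ _)
  choose g hg using hescape
  obtain ⟨x, hxS, hxg⟩ := hS g
  obtain ⟨n, hn⟩ := mem_iUnion.1 (hSψ hxS)
  obtain ⟨N, hN⟩ := eventually_atTop.1 hn
  have hgx := hg (Nat.pair n N)
  rw [Nat.unpair_pair, ← hxg] at hgx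
  exact hgx (hN _ (by have := Nat.right_le_pair n N; omega))

theorem exists_mem_MIdeal_notMem_KIdeal [Countable X] {I : Set (Set X)} (hI : IsIdealOn I)
    {A : Set X} (hAI : A ∈ I) (hA : A.Infinite) : ∃ S ∈ MIdeal I, S ∉ KIdeal I := by
  obtain ⟨c, hc⟩ := Countable.exists_injective_nat X
  let e : X → X := fun y => hA.natEmbedding A (c y)
  have he : Function.Injective e := fun y z h =>
    hc ((hA.natEmbedding A).injective (Subtype.ext h))
  let φ : List X → Set X := fun s => A ∪ {y | s.getLast? = some (e y)}
  have hφI : ∀ s, φ s ∈ I := fun s =>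
    hI.union_mem hAI <| hI.finite_mem <| Set.Subsingleton.finite fun y hy z hz =>
      he (Option.some_injective _ (hy.symm.trans hz))
  refine ⟨{x | ∀ᶠ m in atTop, x m ∈ φ (seg x m)},
    ⟨fun _ => φ, fun _ => hφI, fun x hx => mem_iUnion.2 ⟨0, hx⟩⟩,
    notMem_KIdeal_of_forall_odd hI.proper fun g => ?_⟩
  let x : ℕ → X := fun m => if m % 2 = 0 then e (g (m / 2)) else g (m / 2)
  have hx_even : ∀ j, x (2 * j) = e (g j) := fun j => by simp [x]
  have hx_odd : ∀ j, x (2 * j + 1) = g j := fun j => by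
    simp only [x, if_neg (show (2 * j + 1) % 2 ≠ 0 by omega), show (2 * j + 1) / 2 = j by omega]
  refine ⟨x, Eventually.of_forall fun m => ?_, hx_odd⟩
  obtain ⟨j, rfl | rfl⟩ := Nat.even_or_odd' m
  · exact Or.inl (hx_even j ▸ (hA.natEmbedding A (c (g j))).2)
  · exact Or.inr (by simp [getLast?_seg_succ, hx_even, hx_odd])

end MillerIdeal

/-- `K_I = M_I` iff `I` is the ideal of finite subsets of `X`. -/
theorem stmt4 (X : Type) [Countable X] (I : Set (Set X)) (hI : IsIdealOn I) :
    KIdeal I = MIdeal I ↔ I = finIdeal X := by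
  constructor
  · intro hKM
    ext A
    refine ⟨fun hA => ?_, fun hA => hI.finite_mem hA⟩
    by_contra hA_inf
    obtain ⟨S, hSM, hSK⟩ := exists_mem_MIdeal_notMem_KIdeal hI hA hA_inf
    exact hSK (hKM ▸ hSM)
  · rintro rfl
    exact (KIdeal_subset_MIdeal _).antisymm MIdeal_finIdeal_subset_KIdeal

end
end

section
/- For all ideals I, J on countable sets, add*_ω(I⊗J) = min{𝔟, add*_ω(I), add*_ω(J)}, where I⊗J is the Fubini product. -/
open Cardinal Filter Set
open scoped ENNReal

noncomputable section

/-! If `𝒜` witnesses `add*_ω` for `I` (resp. `J`), the cylinders `A × Y` (resp. `X × A`) witness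
it for `I ⊗ J`; and if `F` is unbounded, the regions below the graphs of the monotone envelopes
of `f ∈ F` witness it for `I ⊗ J`. So `add*_ω(I ⊗ J)` is at most each of the three cardinals.

Conversely, let `𝒜 ⊆ I ⊗ J` be smaller than `𝔟`, `add*_ω(I)` and `add*_ω(J)`. The sets of
`J`-positive columns of members of `𝒜` are almost covered by countably many sets in `I`, and
since `add*_ω(J)` is uncountable the same holds for the `J`-small sections; adding finite sets
makes both covers increasing sequences `D n ∈ I`, `E m ∈ J` that cover genuinely. For `A ∈ 𝒜`,
the index of the first `E m` containing the section of `A` at `x` is a function of `x`, and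
fewer than `𝔟` such functions are bounded by one `g` up to additive constants. Then the
countably many sets `D k × Y ∪ {(x, y) | y ∈ E (g x + k)}` of `I ⊗ J` cover every `A ∈ 𝒜`, so
`𝒜` is not a witness. -/

section

variable {X Y : Type}

lemma alSub_of_subset {A B : Set X} (h : A ⊆ B) : AlSub A B := by
  simp [AlSub, sdiff_eq_empty.2 h]

lemma not_leStar_add_one (g : ℕ → ℕ) : ¬ LeStar (fun n => g n + 1) g := fun h =>
  let ⟨_, hn⟩ := h.exists
  Nat.not_succ_le_self _ hn

lemma LeStar.exists_le_add {f g : ℕ → ℕ} (h : LeStar f g) : ∃ k, ∀ n, f n ≤ g n + k := by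
  obtain ⟨N, hN⟩ := eventually_atTop.1 h
  refine ⟨∑ i ∈ Finset.range N, f i, fun n => ?_⟩
  rcases lt_or_ge n N with hn | hn
  · exact (Finset.single_le_sum (fun _ _ => Nat.zero_le _) (Finset.mem_range.2 hn)).trans
      (Nat.le_add_left _ _)
  · exact (hN n hn).trans (Nat.le_add_right _ _)

lemma exists_le_add_of_mk_lt_bNum [Countable X] {ι : Type} (f : ι → X → ℕ) (hf : #ι < bNum) :
    ∃ g : X → ℕ, ∀ i, ∃ k, ∀ x, f i x ≤ g x + k := by
  obtain ⟨c, hc⟩ := Countable.exists_injective_nat X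
  set f' : ι → ℕ → ℕ := fun i => Function.extend c (f i) 0
  obtain ⟨g, hg⟩ : ∃ g, ∀ i, LeStar (f' i) g := by
    by_contra! h
    have : bNum ≤ #(range f') := csInf_le' ⟨range f', fun g => ?_, rfl⟩
    · exact (this.trans mk_range_le).not_gt hf
    obtain ⟨i, hi⟩ := h g
    exact ⟨f' i, mem_range_self i, hi⟩
  refine ⟨g ∘ c, fun i => ?_⟩
  obtain ⟨k, hk⟩ := (hg i).exists_le_add
  exact ⟨k, fun x => by simpa [f', hc.extend_apply] using hk (c x)⟩

lemma exists_frequently_le_partialSups {G : ℕ → Set ℕ} (hG : ∀ k, (G k).Infinite)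
    (h : ℕ → ℕ → ℕ) :
    ∃ g : ℕ → ℕ, ∀ f, ¬ LeStar f g → ∀ k, {i ∈ G k | h k i ≤ partialSups f i}.Infinite := by
  choose i hiG hi using fun k n => (hG k).exists_gt n
  refine ⟨fun n => partialSups (fun k => h k (i k n)) n, fun f hf k =>
    infinite_of_forall_exists_gt fun a => ?_⟩
  obtain ⟨n, hn, hfn⟩ := frequently_atTop.1 (not_eventually.1 hf) (max a k)
  refine ⟨i k n, ⟨hiG k n, ?_⟩, (le_of_max_le_left hn).trans_lt (hi k n)⟩
  calc h k (i k n) ≤ partialSups (fun k => h k (i k n)) n :=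
        le_partialSups_of_le (fun k => h k (i k n)) (le_of_max_le_right hn)
    _ ≤ f n := (not_le.1 hfn).le
    _ ≤ partialSups f n := le_partialSups f n
    _ ≤ partialSups f (i k n) := (partialSups f).monotone (hi k n).le

namespace IsIdealOn

variable {I : Set (Set X)}

lemma empty_mem (hI : IsIdealOn I) : ∅ ∈ I := hI.finite_mem finite_empty

lemma union_mem_iff (hI : IsIdealOn I) {A B : Set X} : A ∪ B ∈ I ↔ A ∈ I ∧ B ∈ I :=
  ⟨fun h => ⟨hI.subset_mem subset_union_left h, hI.subset_mem subset_union_right h⟩,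
    fun h => hI.union_mem h.1 h.2⟩

lemma partialSups_mem (hI : IsIdealOn I) {B : ℕ → Set X} (hB : ∀ n, B n ∈ I) (n : ℕ) :
    partialSups B n ∈ I :=
  (partialSups_iff_forall (· ∈ I) hI.union_mem_iff).2 fun j _ => hB j

lemma compl_infinite (hI : IsIdealOn I) {A : Set X} (hA : A ∈ I) : Aᶜ.Infinite := fun h =>
  hI.proper (by simpa using hI.union_mem hA (hI.finite_mem h))

lemma infinite (hI : IsIdealOn I) : Infinite X :=
  infinite_univ_iff.1 (by simpa using hI.compl_infinite hI.empty_mem)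

lemma exists_monotone_cover [Countable X] (hI : IsIdealOn I) {B : ℕ → Set X}
    (hB : ∀ n, B n ∈ I) :
    ∃ C : ℕ → Set X, (∀ n, C n ∈ I) ∧ Monotone C ∧ ∀ A n, AlSub A (B n) → ∃ m, A ⊆ C m := by
  obtain ⟨σ, hσ⟩ := exists_surjective_nat (Finset X)
  set C : ℕ → Set X := fun m => B m.unpair.1 ∪ σ m.unpair.2
  refine ⟨partialSups C, hI.partialSups_mem fun m => hI.union_mem (hB _)
    (hI.finite_mem (σ _).finite_toSet), (partialSups C).monotone, fun A n hA => ?_⟩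
  obtain ⟨j, hj⟩ := hσ hA.toFinset
  refine ⟨Nat.pair n j, fun x hx => le_partialSups C _ ?_⟩
  simp only [C, Nat.unpair_pair, hj, mem_union, Finset.mem_coe]
  exact (em _).imp_right fun hxB => (Finite.mem_toFinset hA).2 ⟨hx, hxB⟩

end IsIdealOn

def IsAddStarOmegaWitness (I : Set (Set X)) (𝒜 : Set (Set X)) : Prop :=
  𝒜 ⊆ I ∧ ∀ B : ℕ → Set X, (∀ n, B n ∈ I) → ∃ A ∈ 𝒜, ∀ n, ¬ AlSub A (B n)

namespace IsAddStarOmegaWitness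

variable {I : Set (Set X)} {𝒜 : Set (Set X)}

lemma mk_mem (h : IsAddStarOmegaWitness I 𝒜) : #𝒜 ∈ addStarOmegaFam I :=
  ⟨𝒜, h.1, h.2, rfl⟩

lemma exists_forall_not_alSub (hI : IsIdealOn I) (h : IsAddStarOmegaWitness I 𝒜)
    {𝒞 : Set (Set X)} (h𝒞 : 𝒞 ⊆ I) (hc : 𝒞.Countable) : ∃ A ∈ 𝒜, ∀ C ∈ 𝒞, ¬ AlSub A C := by
  obtain ⟨B, hB⟩ := (hc.insert ∅).exists_eq_range (insert_nonempty _ _)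
  obtain ⟨A, hA, hAB⟩ := h.2 B fun n => insert_subset hI.empty_mem h𝒞 (hB ▸ mem_range_self n)
  refine ⟨A, hA, fun C hC => ?_⟩
  obtain ⟨n, rfl⟩ : C ∈ range B := hB ▸ mem_insert_of_mem ∅ hC
  exact hAB n

lemma aleph0_lt_mk (hI : IsIdealOn I) (h : IsAddStarOmegaWitness I 𝒜) : ℵ₀ < #𝒜 := by
  by_contra! h𝒜
  obtain ⟨A, hA, hAA⟩ := h.exists_forall_not_alSub hI h.1 (le_aleph0_iff_set_countable.1 h𝒜)
  exact hAA A hA (alSub_of_subset subset_rfl)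

end IsAddStarOmegaWitness

lemma aleph0_lt_of_mem_addStarOmegaFam {I : Set (Set X)} (hI : IsIdealOn I) {c : Cardinal}
    (hc : c ∈ addStarOmegaFam I) : ℵ₀ < c := by
  obtain ⟨𝒜, h𝒜, hw, rfl⟩ := hc
  exact IsAddStarOmegaWitness.aleph0_lt_mk hI ⟨h𝒜, hw⟩

lemma exists_monotone_cover_of_forall_lt [Countable X] {I : Set (Set X)} (hI : IsIdealOn I)
    {𝒜 : Set (Set X)} (h𝒜 : 𝒜 ⊆ I) (hlt : ∀ c ∈ addStarOmegaFam I, #𝒜 < c) :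
    ∃ C : ℕ → Set X, (∀ n, C n ∈ I) ∧ Monotone C ∧ ∀ A ∈ 𝒜, ∃ n, A ⊆ C n := by
  obtain ⟨B, hB, hcov⟩ : ∃ B : ℕ → Set X, (∀ n, B n ∈ I) ∧ ∀ A ∈ 𝒜, ∃ n, AlSub A (B n) := by
    by_contra! h
    exact (hlt _ (IsAddStarOmegaWitness.mk_mem ⟨h𝒜, h⟩)).false
  obtain ⟨C, hCI, hCmono, hC⟩ := hI.exists_monotone_cover hB
  exact ⟨C, hCI, hCmono, fun A hA => (hcov A hA).elim (hC A)⟩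

def badColumns (J : Set (Set Y)) (A : Set (X × Y)) : Set X := {x | {y | (x, y) ∈ A} ∉ J}

section Fubini

variable {I : Set (Set X)} {J : Set (Set Y)}

lemma mem_fubini_of_forall_notMem (hI : IsIdealOn I) {A : Set (X × Y)} {C : Set X}
    (hC : C ∈ I) (h : ∀ x ∉ C, {y | (x, y) ∈ A} ∈ J) : A ∈ Fubini I J :=
  hI.subset_mem (fun x hx => by_contra fun hxC => hx (h x hxC)) hC

lemma exists_notMem_of_notMem_badColumns (hJ : IsIdealOn J) {A : Set (X × Y)} {x : X}
    (hx : x ∉ badColumns J A) : ∃ y, (x, y) ∉ A := by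
  by_contra! h
  exact hx (by simpa [badColumns, h] using hJ.proper)

lemma IsAddStarOmegaWitness.image_prod_univ (hI : IsIdealOn I) (hJ : IsIdealOn J)
    {𝒜 : Set (Set X)} (h : IsAddStarOmegaWitness I 𝒜) :
    IsAddStarOmegaWitness (Fubini I J) ((· ×ˢ (univ : Set Y)) '' 𝒜) := by
  refine ⟨?_, fun B hB => ?_⟩
  · rintro _ ⟨A, hA, rfl⟩
    exact mem_fubini_of_forall_notMem hI (h.1 hA) fun x hx => by simpa [hx] using hJ.empty_mem
  obtain ⟨A, hA, hAB⟩ := h.2 (fun n => badColumns J (B n)) hB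
  refine ⟨A ×ˢ Set.univ, mem_image_of_mem _ hA, fun n hfin => hAB n ?_⟩
  refine (hfin.image Prod.fst).subset fun x ⟨hxA, hx⟩ => ?_
  obtain ⟨y, hy⟩ := exists_notMem_of_notMem_badColumns hJ hx
  exact ⟨(x, y), ⟨⟨hxA, mem_univ y⟩, hy⟩, rfl⟩

lemma IsAddStarOmegaWitness.image_univ_prod [Countable X] (hI : IsIdealOn I) (hJ : IsIdealOn J)
    {𝒜 : Set (Set Y)} (h : IsAddStarOmegaWitness J 𝒜) :
    IsAddStarOmegaWitness (Fubini I J) (((univ : Set X) ×ˢ ·) '' 𝒜) := by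
  refine ⟨?_, fun B hB => ?_⟩
  · rintro _ ⟨A, hA, rfl⟩
    exact mem_fubini_of_forall_notMem hI hI.empty_mem fun x _ => by simpa using h.1 hA
  obtain ⟨A, hA, hAC⟩ := h.exists_forall_not_alSub hJ (𝒞 := J ∩ range fun p : ℕ × X =>
    {y | (p.2, y) ∈ B p.1}) inter_subset_left ((countable_range _).mono inter_subset_right)
  refine ⟨Set.univ ×ˢ A, mem_image_of_mem _ hA, fun n hfin => ?_⟩
  obtain ⟨x, hx⟩ := (hI.compl_infinite (hB n)).nonempty
  refine hAC _ ⟨not_not.1 hx, (n, x), rfl⟩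
    ((hfin.preimage (Prod.mk_right_injective x).injOn).subset fun y ⟨hyA, hy⟩ =>
      ⟨⟨mem_univ x, hyA⟩, hy⟩)

lemma exists_isAddStarOmegaWitness_fubini_of_unbounded [Countable X] [Countable Y]
    (hI : IsIdealOn I) (hJ : IsIdealOn J) {F : Set (ℕ → ℕ)} (hF : ∀ g, ∃ f ∈ F, ¬ LeStar f g) :
    ∃ 𝒜, IsAddStarOmegaWitness (Fubini I J) 𝒜 ∧ #𝒜 ≤ #F := by
  have := hI.infinite
  have := hJ.infinite
  obtain ⟨e⟩ := nonempty_equiv_of_countable (α := ℕ) (β := X)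
  obtain ⟨c, hc⟩ := Countable.exists_injective_nat Y
  set below : (ℕ → ℕ) → Set (X × Y) := fun f => {p | c p.2 ≤ partialSups f (e.symm p.1)}
  refine ⟨below '' F, ⟨?_, fun B hB => ?_⟩, mk_image_le⟩
  · rintro _ ⟨f, -, rfl⟩
    exact mem_fubini_of_forall_notMem hI hI.empty_mem fun x _ =>
      hJ.finite_mem (show (c ⁻¹' Iic (partialSups f (e.symm x))).Finite from
        (finite_Iic _).preimage hc.injOn)
  have hy : ∀ k i, ∃ y, e i ∉ badColumns J (B k) → (e i, y) ∉ B k := fun k i => by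
    by_cases hi : e i ∈ badColumns J (B k)
    · exact ⟨Classical.arbitrary Y, absurd hi⟩
    · exact (exists_notMem_of_notMem_badColumns hJ hi).imp fun _ hy _ => hy
  choose y hy using hy
  obtain ⟨g, hg⟩ := exists_frequently_le_partialSups (G := fun k => e ⁻¹' (badColumns J (B k))ᶜ)
    (fun k => (hI.compl_infinite (hB k)).preimage (by simp)) fun k i => c (y k i)
  obtain ⟨f, hfF, hf⟩ := hF g
  refine ⟨below f, mem_image_of_mem _ hfF, fun k hfin => hg f hf k ?_⟩
  have hinj : (fun i => (e i, y k i)).Injective := fun _ _ hij =>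
    e.injective (congrArg Prod.fst hij)
  exact (hfin.preimage hinj.injOn).subset fun i ⟨hi, hle⟩ =>
    ⟨by simpa [below] using hle, hy k i hi⟩

def fubiniBox (D : ℕ → Set X) (E : ℕ → Set Y) (g : X → ℕ) (k : ℕ) : Set (X × Y) :=
  D k ×ˢ Set.univ ∪ {p | p.2 ∈ E (g p.1 + k)}

variable {D : ℕ → Set X} {E : ℕ → Set Y} {g : X → ℕ}

lemma fubiniBox_mem (hI : IsIdealOn I) {k : ℕ} (hD : D k ∈ I) (hE : ∀ m, E m ∈ J) :
    fubiniBox D E g k ∈ Fubini I J :=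
  mem_fubini_of_forall_notMem hI hD fun x hx => by simpa [fubiniBox, hx] using hE (g x + k)

lemma subset_fubiniBox (hD : Monotone D) (hE : Monotone E) {A : Set (X × Y)} {n k : ℕ}
    (hA : ∀ x ∉ D n, ∃ m ≤ g x + k, {y | (x, y) ∈ A} ⊆ E m) :
    A ⊆ fubiniBox D E g (max n k) := by
  rintro ⟨x, y⟩ hxy
  by_cases hx : x ∈ D n
  · exact Or.inl ⟨hD (le_max_left n k) hx, mem_univ y⟩
  · obtain ⟨m, hm, hAm⟩ := hA x hx
    exact Or.inr (hE (hm.trans (Nat.add_le_add_left (le_max_right n k) _)) (hAm hxy))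

theorem not_isAddStarOmegaWitness_fubini [Countable X] [Countable Y] (hI : IsIdealOn I)
    (hJ : IsIdealOn J) {𝒜 : Set (Set (X × Y))} (hb : #𝒜 < bNum)
    (hltI : ∀ c ∈ addStarOmegaFam I, #𝒜 < c) (hltJ : ∀ c ∈ addStarOmegaFam J, #𝒜 < c) :
    ¬ IsAddStarOmegaWitness (Fubini I J) 𝒜 := by
  rintro ⟨h𝒜, hw⟩
  obtain ⟨D, hDI, hDmono, hD⟩ := exists_monotone_cover_of_forall_lt hI
    (image_subset_iff.2 h𝒜) fun c hc => mk_image_le.trans_lt (hltI c hc)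
  set 𝒮 : Set (Set Y) := J ∩ range fun p : 𝒜 × X => {y | (p.2, y) ∈ (p.1 : Set (X × Y))}
  have h𝒮 : ∀ c ∈ addStarOmegaFam J, #𝒮 < c := fun c hc => by
    have hc₀ := aleph0_lt_of_mem_addStarOmegaFam hJ hc
    calc #𝒮 ≤ #(𝒜 × X) := (mk_le_mk_of_subset inter_subset_right).trans mk_range_le
      _ ≤ #𝒜 * ℵ₀ := by rw [mk_prod, lift_id, lift_id]; gcongr; exact mk_le_aleph0
      _ < c := mul_lt_of_lt hc₀.le (hltJ c hc) hc₀
  obtain ⟨E, hEJ, hEmono, hE⟩ := exists_monotone_cover_of_forall_lt hJ inter_subset_left h𝒮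
  obtain ⟨g, hg⟩ := exists_le_add_of_mk_lt_bNum
    (fun (A : 𝒜) x => sInf {m | {y | (x, y) ∈ (A : Set (X × Y))} ⊆ E m}) hb
  obtain ⟨A, hA, hAB⟩ := hw (fubiniBox D E g) fun k => fubiniBox_mem hI (hDI k) hEJ
  obtain ⟨n, hn⟩ := hD _ (mem_image_of_mem _ hA)
  obtain ⟨k, hk⟩ := hg ⟨A, hA⟩
  refine hAB (max n k) (alSub_of_subset (subset_fubiniBox hDmono hEmono fun x hx => ?_))
  have hxJ : {y | (x, y) ∈ A} ∈ J := not_not.1 fun h => hx (hn h)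
  obtain ⟨m, hm⟩ := hE _ ⟨hxJ, (⟨A, hA⟩, x), rfl⟩
  exact ⟨_, hk x, Nat.sInf_mem (s := {m | {y | (x, y) ∈ A} ⊆ E m}) ⟨m, hm⟩⟩

end Fubini

end

/-- `add*_ω(I ⊗ J) = min {𝔟, add*_ω(I), add*_ω(J)}` (the `min`, with the
convention `add*_ω = ∞` for ideals with no witnessing family, is rendered as the
infimum of `{𝔟} ∪ addStarOmegaFam I ∪ addStarOmegaFam J`). -/
theorem stmt5 (X Y : Type) [Countable X] [Countable Y]
    (I : Set (Set X)) (J : Set (Set Y)) (hI : IsIdealOn I) (hJ : IsIdealOn J) :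
    sInf (addStarOmegaFam (Fubini I J)) =
      sInf (insert bNum (addStarOmegaFam I ∪ addStarOmegaFam J)) := by
  have hunb : ∀ g : ℕ → ℕ, ∃ f ∈ (univ : Set (ℕ → ℕ)), ¬ LeStar f g :=
    fun g => ⟨_, mem_univ _, not_leStar_add_one g⟩
  have le_mk {𝒜} (h : IsAddStarOmegaWitness (Fubini I J) 𝒜) :
      sInf (addStarOmegaFam (Fubini I J)) ≤ #𝒜 :=
    csInf_le' h.mk_mem
  refine le_antisymm (le_csInf (insert_nonempty _ _) ?_) (le_csInf ?_ ?_)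
  · rintro _ (rfl | ⟨𝒜, h𝒜, hw, rfl⟩ | ⟨𝒜, h𝒜, hw, rfl⟩)
    · refine le_csInf ⟨_, univ, hunb, rfl⟩ fun _ ⟨F, hF, hc⟩ => hc ▸ ?_
      obtain ⟨𝒜, hw, hle⟩ := exists_isAddStarOmegaWitness_fubini_of_unbounded hI hJ hF
      exact (le_mk hw).trans hle
    · exact (le_mk (IsAddStarOmegaWitness.image_prod_univ hI hJ ⟨h𝒜, hw⟩)).trans mk_image_le
    · exact (le_mk (IsAddStarOmegaWitness.image_univ_prod hI hJ ⟨h𝒜, hw⟩)).trans mk_image_le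
  · obtain ⟨𝒜, hw, -⟩ := exists_isAddStarOmegaWitness_fubini_of_unbounded hI hJ hunb
    exact ⟨_, hw.mk_mem⟩
  · rintro _ ⟨𝒜, h𝒜, hw, rfl⟩
    by_contra! hlt
    refine not_isAddStarOmegaWitness_fubini hI hJ (hlt.trans_le (csInf_le' (mem_insert _ _)))
      (fun c hc => hlt.trans_le (csInf_le' (mem_insert_of_mem _ (Or.inl hc))))
      (fun c hc => hlt.trans_le (csInf_le' (mem_insert_of_mem _ (Or.inr hc)))) ⟨h𝒜, hw⟩
end
end
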